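/- Let n ≥ 2, f ≥ 1, D ⊆ {1,…,n−1}, and let λ ∈ ℤ^n satisfy (H_f). Let w and w' be two D-admissible permutations such that both w·λ'_D and w'·λ'_D are dominant. Then w'∘w⁻¹ lies in the subgroup of S_n generated by the adjacent transpositions s_k for k ∈ supp(fθ − w·λ'_D). (Paper: Lemma 'inclusion' in §2.2, for G = GL_n: W(C_P) ⊆ W(P(C_P))·w.) -/

import Mathlib

/-!
Setup (§2.2 of the paper, for `G = GL_n`): the symmetric group `S_n` acts on `ℚ^n` by
permuting coordinates, `(w • v) k = v (w⁻¹ k)`.  Coordinates are indexed by `Fin n`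
(`0`-based), so the simple roots are `α i = e i − e (i+1)` for `i ∈ {0, …, n−2}`
(the paper's `α_{i+1}`), subsets of simple roots are subsets of
`{0, …, n−2} = Finset.range (n−1)`, and `θ = (n−1, n−2, …, 1, 0)`.
-/

namespace BHHMS

/-- The standard basis vector `e i` of `ℚ^n`. -/
def stde (n i : ℕ) : Fin n → ℚ := fun k => if (k : ℕ) = i then 1 else 0

/-- The simple root `α i = e i − e (i+1)`, for `i ∈ {0, …, n−2}`. -/
def simpleRoot (n i : ℕ) : Fin n → ℚ := stde n i - stde n (i + 1)

/-- The action of `S_n` on `ℚ^n` permuting the coordinates: `(w • v) k = v (w⁻¹ k)`. -/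
def permAct (n : ℕ) (w : Equiv.Perm (Fin n)) (v : Fin n → ℚ) : Fin n → ℚ :=
  fun k => v (w⁻¹ k)

/-- `v ≤ v'` iff `v' − v` is a `ℚ≥0`-linear combination of the simple roots. -/
def rootLE (n : ℕ) (v v' : Fin n → ℚ) : Prop :=
  ∃ c : ℕ → ℚ, (∀ i, 0 ≤ c i) ∧ v' - v = ∑ i ∈ Finset.range (n - 1), c i • simpleRoot n i

/-- `v` is dominant iff `v 0 ≥ v 1 ≥ … ≥ v (n−1)`. -/
def Dominant (n : ℕ) (v : Fin n → ℚ) : Prop := ∀ i j : Fin n, i ≤ j → v j ≤ v i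

/-- The adjacent transposition `s i = (i, i+1)` (junk value `1` if `i + 1 ≥ n`). -/
def adjSwap (n i : ℕ) : Equiv.Perm (Fin n) :=
  if h : i + 1 < n then Equiv.swap ⟨i, Nat.lt_of_succ_lt h⟩ ⟨i + 1, h⟩ else 1

/-- The subgroup `W_D ⊆ S_n` generated by the `s i` for `i ∈ D`. -/
def WD (n : ℕ) (D : Finset ℕ) : Subgroup (Equiv.Perm (Fin n)) :=
  Subgroup.closure (adjSwap n '' ↑D)

/-- `Σ_{w ∈ W_D} w·v`. -/
noncomputable def WDsum (n : ℕ) (D : Finset ℕ) (v : Fin n → ℚ) : Fin n → ℚ :=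
  ∑ᶠ w ∈ WD n D, permAct n w v

/-- The `W_D`-average `λ'_D = |W_D|⁻¹ Σ_{w ∈ W_D} w·λ`. -/
noncomputable def avg (n : ℕ) (D : Finset ℕ) (v : Fin n → ℚ) : Fin n → ℚ :=
  ((Nat.card ↥(WD n D) : ℚ))⁻¹ • WDsum n D v

/-- For `v` of coordinate sum `0`, writing `v = Σ_i c_i • α_i` one has
`c_i = v 0 + ⋯ + v i`; then `supp v = {i : c_i ≠ 0}`. -/
def suppOf (n : ℕ) (v : Fin n → ℚ) : Finset ℕ :=
  (Finset.range (n - 1)).filter fun i => (∑ k : Fin n, if (k : ℕ) ≤ i then v k else 0) ≠ 0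

/-- `w` is `D`-admissible iff `w (i+1) = w i + 1` for every `i ∈ D`. -/
def IsAdmissible (n : ℕ) (D : Finset ℕ) (w : Equiv.Perm (Fin n)) : Prop :=
  ∀ i ∈ D, ∀ h : i + 1 < n,
    ((w ⟨i + 1, h⟩ : Fin n) : ℕ) = ((w ⟨i, Nat.lt_of_succ_lt h⟩ : Fin n) : ℕ) + 1

/-- The image `w(D) = {w i : i ∈ D}` as a subset of `ℕ`. -/
def permImage (n : ℕ) (w : Equiv.Perm (Fin n)) (D : Finset ℕ) : Finset ℕ :=
  D.image fun i => if h : i < n then ((w ⟨i, h⟩ : Fin n) : ℕ) else i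

/-- `θ = (n−1, n−2, …, 1, 0)`. -/
def theta (n : ℕ) : Fin n → ℚ := fun k => (n : ℚ) - 1 - ((k : ℕ) : ℚ)

/-- A vector of `ℤ^n` seen in `ℚ^n`. -/
def ratVec (n : ℕ) (lam : Fin n → ℤ) : Fin n → ℚ := fun k => ((lam k : ℤ) : ℚ)

/-- `λ ∈ ℤ^n` satisfies `(H_f)` iff `σ·λ ≤ fθ` for every `σ ∈ S_n`. -/
def SatisfiesHf (n f : ℕ) (lam : Fin n → ℤ) : Prop :=
  ∀ σ : Equiv.Perm (Fin n), rootLE n (permAct n σ (ratVec n lam)) ((f : ℚ) • theta n)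

/-!
The vector `ν = w·λ'_D` is an average of vectors `σ·λ ≤ fθ`, hence `fθ − ν` is a nonnegative
combination `Σ cᵢ αᵢ`, with `cᵢ` the partial sums of its coordinates. If `ν k = ν (k+1)` and
`c_k = 0`, then `(fθ − ν) k = −c_{k−1} ≤ 0 ≤ c_{k+1} = (fθ − ν) (k+1)`, contradicting the fact
that `fθ − ν` drops by `f ≥ 1` from coordinate `k` to `k+1`. So every adjacent transposition
fixing the dominant vector `ν` is some `s_k` with `k ∈ supp (fθ − ν)`. Finally `w·λ'_D` and
`w'·λ'_D` are dominant rearrangements of the same vector, hence equal, so `w' w⁻¹` fixes `ν`, and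
the stabilizer of a dominant vector is generated by the adjacent transpositions fixing it.
-/

section PermAct

variable {n : ℕ}

lemma permAct_mul (w u : Equiv.Perm (Fin n)) (v : Fin n → ℚ) :
    permAct n w (permAct n u v) = permAct n (w * u) v := by
  ext k
  simp [permAct, mul_inv_rev]

lemma permAct_smul_sum {ι : Type*} (w : Equiv.Perm (Fin n)) (c : ℚ) (s : Finset ι)
    (v : ι → Fin n → ℚ) :
    permAct n w (c • ∑ u ∈ s, v u) = c • ∑ u ∈ s, permAct n w (v u) := by
  ext k
  simp [permAct, Finset.sum_apply]

lemma permAct_avg (w : Equiv.Perm (Fin n)) {D : Finset ℕ} {s : Finset (Equiv.Perm (Fin n))}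
    (hs : (s : Set (Equiv.Perm (Fin n))) = WD n D) (v : Fin n → ℚ) :
    permAct n w (avg n D v) = (s.card : ℚ)⁻¹ • ∑ u ∈ s, permAct n (w * u) v := by
  have hcard : Nat.card (WD n D) = s.card := by
    rw [← SetLike.coe_sort_coe, ← hs, Nat.card_coe_set_eq, Set.ncard_coe_finset]
  have hsum : WDsum n D v = ∑ u ∈ s, permAct n u v := by
    rw [WDsum, ← finsum_mem_coe_finset, hs]
    rfl
  rw [avg, hsum, hcard, permAct_smul_sum]
  simp only [permAct_mul]

lemma permAct_eq_of_dominant {w w' : Equiv.Perm (Fin n)} {μ : Fin n → ℚ}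
    (hw : Dominant n (permAct n w μ)) (hw' : Dominant n (permAct n w' μ)) :
    permAct n w' μ = permAct n w μ :=
  Tuple.unique_antitone (f := μ) (σ := w'⁻¹) (τ := w⁻¹) hw' hw

end PermAct

section RootOrder

variable {n : ℕ}

lemma rootLE_inv_card_smul_sum {ι : Type*} {s : Finset ι} (hs : s.Nonempty)
    {v : ι → Fin n → ℚ} {t : Fin n → ℚ} (h : ∀ u ∈ s, rootLE n (v u) t) :
    rootLE n ((s.card : ℚ)⁻¹ • ∑ u ∈ s, v u) t := by
  choose! c hc0 hc using h
  have hcard : (s.card : ℚ) ≠ 0 := Nat.cast_ne_zero.2 hs.card_pos.ne'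
  refine ⟨fun i => (s.card : ℚ)⁻¹ * ∑ u ∈ s, c u i,
    fun i => mul_nonneg (by positivity) (Finset.sum_nonneg fun u hu => hc0 u hu i), ?_⟩
  calc t - (s.card : ℚ)⁻¹ • ∑ u ∈ s, v u
      = (s.card : ℚ)⁻¹ • ∑ u ∈ s, (t - v u) := by
        rw [Finset.sum_sub_distrib, Finset.sum_const, smul_sub, ← Nat.cast_smul_eq_nsmul ℚ,
          smul_smul, inv_mul_cancel₀ hcard, one_smul]
    _ = (s.card : ℚ)⁻¹ • ∑ u ∈ s, ∑ i ∈ Finset.range (n - 1), c u i • simpleRoot n i := by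
        rw [Finset.sum_congr rfl hc]
    _ = _ := by
        simp only [Finset.sum_comm (s := s), Finset.smul_sum, ← Finset.sum_smul, smul_smul]

/-- The coefficient `c_k = v 0 + ⋯ + v k` of `α k` in `v`, as in `suppOf`. -/
def partialSum (n k : ℕ) : (Fin n → ℚ) →ₗ[ℚ] ℚ where
  toFun v := ∑ x : Fin n, if (x : ℕ) ≤ k then v x else 0
  map_add' v v' := by
    simp only [Pi.add_apply, ← Finset.sum_add_distrib]
    exact Finset.sum_congr rfl fun x _ => by split_ifs <;> simp
  map_smul' c v := by
    simp only [Pi.smul_apply, smul_eq_mul, RingHom.id_apply, Finset.mul_sum]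
    exact Finset.sum_congr rfl fun x _ => by split_ifs <;> simp

lemma partialSum_apply (k : ℕ) (v : Fin n → ℚ) :
    partialSum n k v = ∑ x : Fin n, if (x : ℕ) ≤ k then v x else 0 := rfl

lemma mem_suppOf {v : Fin n → ℚ} {k : ℕ} :
    k ∈ suppOf n v ↔ k < n - 1 ∧ partialSum n k v ≠ 0 := by
  rw [suppOf, Finset.mem_filter, Finset.mem_range, partialSum_apply]

lemma partialSum_zero (h : 0 < n) (v : Fin n → ℚ) : partialSum n 0 v = v ⟨0, h⟩ := by
  rw [partialSum_apply, Fintype.sum_eq_single ⟨0, h⟩ fun x hx => if_neg ?_]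
  · simp
  · exact fun hx0 => hx (Fin.ext (Nat.le_zero.1 hx0))

lemma partialSum_succ {k : ℕ} (h : k + 1 < n) (v : Fin n → ℚ) :
    partialSum n (k + 1) v = partialSum n k v + v ⟨k + 1, h⟩ := by
  rw [partialSum_apply, partialSum_apply, ← Fintype.sum_ite_eq' (⟨k + 1, h⟩ : Fin n) v,
    ← Finset.sum_add_distrib]
  refine Finset.sum_congr rfl fun x _ => ?_
  have : x = ⟨k + 1, h⟩ ↔ (x : ℕ) = k + 1 := Fin.ext_iff
  split_ifs <;> simp_all <;> omega

lemma partialSum_simpleRoot {i : ℕ} (hi : i + 1 < n) (k : ℕ) :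
    partialSum n k (simpleRoot n i) = if i = k then 1 else 0 := by
  have he : ∀ j < n, partialSum n k (stde n j) = if j ≤ k then 1 else 0 := fun j hj => by
    rw [partialSum_apply, Fintype.sum_eq_single ⟨j, hj⟩ fun x hx => ?_]
    · simp [stde]
    · have : (x : ℕ) ≠ j := fun h => hx (Fin.ext h)
      simp [stde, this]
  rw [simpleRoot, map_sub, he i (by omega), he (i + 1) hi]
  split_ifs <;> first | omega | norm_num

lemma partialSum_sum_simpleRoot (c : ℕ → ℚ) (k : ℕ) :
    partialSum n k (∑ i ∈ Finset.range (n - 1), c i • simpleRoot n i) =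
      if k < n - 1 then c k else 0 := by
  rw [map_sum, Finset.sum_congr rfl fun i hi => by
    rw [map_smul, partialSum_simpleRoot (by have := Finset.mem_range.1 hi; omega), smul_ite, smul_zero]]
  simp [Finset.sum_ite_eq', Finset.mem_range]

lemma partialSum_nonneg_of_rootLE {v t : Fin n → ℚ} (h : rootLE n v t) (k : ℕ) :
    0 ≤ partialSum n k (t - v) := by
  obtain ⟨c, hc0, hc⟩ := h
  rw [hc, partialSum_sum_simpleRoot]
  split_ifs
  exacts [hc0 k, le_rfl]

lemma mem_suppOf_sub_of_eq {t ν : Fin n → ℚ} (h : rootLE n ν t) {k : ℕ} (hk : k + 1 < n)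
    (ht : t ⟨k + 1, hk⟩ < t ⟨k, by omega⟩) (hν : ν ⟨k, by omega⟩ = ν ⟨k + 1, hk⟩) :
    k ∈ suppOf n (t - ν) := by
  refine mem_suppOf.2 ⟨by omega, fun h0 => ?_⟩
  have hP := partialSum_nonneg_of_rootLE h
  have hsucc : 0 ≤ (t - ν) ⟨k + 1, hk⟩ := by
    linarith [partialSum_succ hk (t - ν), hP (k + 1)]
  have hk : (t - ν) ⟨k, by omega⟩ ≤ 0 := by
    cases k with
    | zero => rw [← partialSum_zero (by omega) (t - ν), h0]
    | succ j => linarith [partialSum_succ (k := j) (by omega) (t - ν), hP j]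
  simp only [Pi.sub_apply] at hsucc hk
  linarith

lemma smul_theta_succ_lt {c : ℚ} (hc : 0 < c) {k : ℕ} (hk : k + 1 < n) :
    (c • theta n) ⟨k + 1, hk⟩ < (c • theta n) ⟨k, by omega⟩ := by
  simp only [Pi.smul_apply, theta, smul_eq_mul, Nat.cast_add, Nat.cast_one]
  linarith

end RootOrder

section Stabilizer

variable {n : ℕ}

lemma adjSwap_apply_self {k : ℕ} (hk : k + 1 < n) : adjSwap n k ⟨k, by omega⟩ = ⟨k + 1, hk⟩ := by
  rw [adjSwap, dif_pos hk, Equiv.swap_apply_left]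

variable {ν : Fin n → ℚ} {G : Subgroup (Equiv.Perm (Fin n))}

lemma mem_orbit_of_dominant_of_le (hν : Dominant n ν)
    (hG : ∀ k (hk : k + 1 < n), ν ⟨k, by omega⟩ = ν ⟨k + 1, hk⟩ → adjSwap n k ∈ G)
    {x y : Fin n} (hle : x ≤ y) (hxy : ν x = ν y) : y ∈ MulAction.orbit G x := by
  obtain ⟨d, hd⟩ : ∃ d, (y : ℕ) = x + d := ⟨y - x, by rw [Fin.le_def] at hle; omega⟩
  induction d generalizing y with
  | zero =>
    obtain rfl : y = x := Fin.ext (by simpa using hd)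
    exact MulAction.mem_orbit_self y
  | succ d ih =>
    obtain ⟨z, hz⟩ : ∃ z : Fin n, (z : ℕ) = x + d := ⟨⟨x + d, by omega⟩, rfl⟩
    have hxz : x ≤ z := Fin.le_def.2 (by omega)
    have hzy : z ≤ y := Fin.le_def.2 (by omega)
    have hνz : ν x = ν z := le_antisymm (hxy.le.trans (hν z y hzy)) (hν x z hxz)
    have hy : y = ⟨z + 1, by omega⟩ := Fin.ext (show (y : ℕ) = z + 1 by omega)
    obtain ⟨g, hg⟩ := MulAction.mem_orbit_iff.1 (ih hxz hνz hz)
    rw [hy] at hxy ⊢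
    refine MulAction.mem_orbit_iff.2 ⟨⟨adjSwap n z, hG z _ (hνz.symm.trans hxy)⟩ * g, ?_⟩
    rw [mul_smul, hg]
    exact adjSwap_apply_self _

lemma mem_orbit_of_dominant (hν : Dominant n ν)
    (hG : ∀ k (hk : k + 1 < n), ν ⟨k, by omega⟩ = ν ⟨k + 1, hk⟩ → adjSwap n k ∈ G)
    {x y : Fin n} (hxy : ν x = ν y) : y ∈ MulAction.orbit G x := by
  rcases le_total x y with hle | hle
  · exact mem_orbit_of_dominant_of_le hν hG hle hxy
  · exact MulAction.mem_orbit_symm.1 (mem_orbit_of_dominant_of_le hν hG hle hxy.symm)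

lemma mem_closure_adjSwap_of_dominant (hν : Dominant n ν) {T : Set ℕ}
    (hT : ∀ k ∈ T, k + 1 < n)
    (hνT : ∀ k (hk : k + 1 < n), ν ⟨k, by omega⟩ = ν ⟨k + 1, hk⟩ → k ∈ T)
    {σ : Equiv.Perm (Fin n)} (hσ : ∀ x, ν (σ x) = ν x) :
    σ ∈ Subgroup.closure (adjSwap n '' T) := by
  have hswap : ∀ τ ∈ adjSwap n '' T, τ.IsSwap := by
    rintro _ ⟨k, hk, rfl⟩
    rw [adjSwap, dif_pos (hT k hk)]
    exact ⟨_, _, by simp [Fin.ext_iff], rfl⟩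
  refine (mem_closure_isSwap hswap).2 ⟨Set.toFinite _, fun x => ?_⟩
  exact mem_orbit_of_dominant hν
    (fun k hk he => Subgroup.subset_closure (Set.mem_image_of_mem _ (hνT k hk he))) (hσ x).symm

end Stabilizer

theorem statement5_general (n f : ℕ) (hf : 1 ≤ f) (D : Finset ℕ)
    (lam : Fin n → ℤ) (hlam : SatisfiesHf n f lam)
    (w w' : Equiv.Perm (Fin n))
    (hdomw : Dominant n (permAct n w (avg n D (ratVec n lam))))
    (hdomw' : Dominant n (permAct n w' (avg n D (ratVec n lam)))) :
    w' * w⁻¹ ∈ Subgroup.closure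
      (adjSwap n '' ↑(suppOf n ((f : ℚ) • theta n - permAct n w (avg n D (ratVec n lam))))) := by
  set μ := avg n D (ratVec n lam)
  obtain ⟨s, hs⟩ := (Set.toFinite (WD n D : Set (Equiv.Perm (Fin n)))).exists_finset_coe
  have hle : rootLE n (permAct n w μ) ((f : ℚ) • theta n) := by
    rw [permAct_avg w hs]
    refine rootLE_inv_card_smul_sum ⟨1, ?_⟩ fun u _ => hlam (w * u)
    rw [← Finset.mem_coe, hs]
    exact (WD n D).one_mem
  have hstab : ∀ x, permAct n w μ ((w' * w⁻¹) x) = permAct n w μ x := fun x => by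
    rw [← congrFun (permAct_eq_of_dominant hdomw hdomw') ((w' * w⁻¹) x)]
    simp [permAct]
  have hf' : (0 : ℚ) < f := by exact_mod_cast hf
  refine mem_closure_adjSwap_of_dominant hdomw (fun k hk => ?_)
    (fun k hk he => mem_suppOf_sub_of_eq hle hk (smul_theta_succ_lt hf' hk) he) hstab
  have := (mem_suppOf.1 hk).1
  omega

/-- Lemma `inclusion`, §2.2, for `G = GL_n`: `W(C_P) ⊆ W(P(C_P))·w`.
If `w, w'` are two `D`-admissible permutations with `w·λ'_D` and `w'·λ'_D` dominant, then
`w' ∘ w⁻¹` lies in the subgroup generated by the `s k`, `k ∈ supp (fθ − w·λ'_D)`. -/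
theorem statement5 (n f : ℕ) (hn : 2 ≤ n) (hf : 1 ≤ f) (D : Finset ℕ)
    (hD : D ⊆ Finset.range (n - 1)) (lam : Fin n → ℤ) (hlam : SatisfiesHf n f lam)
    (w w' : Equiv.Perm (Fin n)) (hw : IsAdmissible n D w) (hw' : IsAdmissible n D w')
    (hdomw : Dominant n (permAct n w (avg n D (ratVec n lam))))
    (hdomw' : Dominant n (permAct n w' (avg n D (ratVec n lam)))) :
    w' * w⁻¹ ∈ Subgroup.closure
      (adjSwap n '' ↑(suppOf n ((f : ℚ) • theta n - permAct n w (avg n D (ratVec n lam))))) :=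
  statement5_general n f hf D lam hlam w w' hdomw hdomw'

end BHHMS
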